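/- arXiv:2002.08151 — 4 statements merged into one kernel-verified Lean document; each statement's English description precedes it below -/
import Mathlib

section
/- The 7×6 integer matrix M whose rows are (0,1,0,0,1,0), (1,0,0,0,0,1), (1,0,0,1,0,0), (0,1,1,0,0,0), (0,0,1,0,0,1), (0,0,0,1,1,0), (1,-1,1,-1,1,-1) has zero nullity; that is, the linear map ℤ^6 → ℤ^7 given by x ↦ M·x is injective, so for any x, y ∈ ℤ^6 with M·x = M·y one has x = y. -/
/-!
The first six rows of the matrix read `x i + x j = 0` along the edges of the hexagon
`0 – 3 – 4 – 1 – 2 – 5 – 0`, so they force the coordinates to alternate in sign along it,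
`x = x 0 • (1, -1, 1, -1, 1, -1)`. The last row is the alternating sum, which then equals
`6 • x 0`; without additive torsion this vanishes only if `x 0 = 0`.
-/

open Matrix

def cornerArcMatrix (R : Type*) [Ring R] : Matrix (Fin 7) (Fin 6) R :=
  !![0, 1, 0, 0, 1, 0;
     1, 0, 0, 0, 0, 1;
     1, 0, 0, 1, 0, 0;
     0, 1, 1, 0, 0, 0;
     0, 0, 1, 0, 0, 1;
     0, 0, 0, 1, 1, 0;
     1, -1, 1, -1, 1, -1]

theorem alternatingSum_eq_six_nsmul_of_path {A : Type*} [AddCommGroup A] {x : Fin 6 → A}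
    (h03 : x 0 + x 3 = 0) (h34 : x 3 + x 4 = 0) (h14 : x 1 + x 4 = 0)
    (h12 : x 1 + x 2 = 0) (h25 : x 2 + x 5 = 0) :
    x 0 - x 1 + x 2 - x 3 + x 4 - x 5 = 6 • x 0 := by
  linear_combination (norm := module) (-5 : ℤ) • h03 + 4 • h34 - 3 • h14 + 2 • h12 - h25

section
variable {R : Type*} [Ring R]

theorem cornerArcMatrix_mulVec (x : Fin 6 → R) :
    cornerArcMatrix R *ᵥ x =
      ![x 1 + x 4, x 0 + x 5, x 0 + x 3, x 1 + x 2, x 2 + x 5, x 3 + x 4,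
        x 0 - x 1 + x 2 - x 3 + x 4 - x 5] := by
  ext i
  fin_cases i <;> simp [cornerArcMatrix, mulVec, dotProduct, Fin.sum_univ_succ]; abel

theorem eq_zero_of_cornerArcMatrix_mulVec_eq_zero [IsAddTorsionFree R] {x : Fin 6 → R}
    (hx : cornerArcMatrix R *ᵥ x = 0) : x = 0 := by
  rw [cornerArcMatrix_mulVec] at hx
  simp only [cons_eq_zero_iff, zero_empty, and_true] at hx
  obtain ⟨h14, -, h03, h12, h25, h34, hsum⟩ := hx
  have hx0 : x 0 = 0 := by
    rwa [alternatingSum_eq_six_nsmul_of_path h03 h34 h14 h12 h25, nsmul_eq_zero_iff,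
      or_iff_left (by norm_num)] at hsum
  ext i
  fin_cases i <;> simp_all

theorem cornerArcMatrix_mulVec_injective [IsAddTorsionFree R] :
    Function.Injective (cornerArcMatrix R).mulVec := fun x y h =>
  sub_eq_zero.mp <| eq_zero_of_cornerArcMatrix_mulVec_eq_zero <| by
    rw [mulVec_sub, h, sub_self]
end

/-- The 7×6 integer matrix of equation (13) of the paper has zero nullity:
the linear map `ℤ^6 → ℤ^7` given by `x ↦ M ⬝ x` is injective, i.e. whenever
`M ⬝ x = M ⬝ y` one has `x = y`. -/
theorem matrix_13_injective :
    Function.Injective (fun x : Fin 6 → ℤ =>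
      (!![0, 1, 0, 0, 1, 0;
          1, 0, 0, 0, 0, 1;
          1, 0, 0, 1, 0, 0;
          0, 1, 1, 0, 0, 0;
          0, 0, 1, 0, 0, 1;
          0, 0, 0, 1, 1, 0;
          1, -1, 1, -1, 1, -1] : Matrix (Fin 7) (Fin 6) ℤ).mulVec x) :=
  cornerArcMatrix_mulVec_injective
end

section
/- For all natural numbers m, n, k, every integer matrix A : Matrix (Fin m) (Fin n) ℤ and every integer matrix B : Matrix (Fin k) (Fin n) ℤ, the set {B.mulVec (fun j => (x j : ℤ)) | x : Fin n → ℕ, A.mulVec (fun j => (x j : ℤ)) = 0} is a finitely generated additive submonoid of Fin k → ℤ. -/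
/-- The abstract core of Proposition 14.1: the image under an integer linear map
`B` of the monoid of nonnegative integer solutions of a homogeneous integer
linear system `A ⬝ x = 0` is a finitely generated additive submonoid of
`Fin k → ℤ`. -/
theorem image_of_nonneg_solutions_fg (m n k : ℕ)
    (A : Matrix (Fin m) (Fin n) ℤ) (B : Matrix (Fin k) (Fin n) ℤ) :
    ∃ S : AddSubmonoid (Fin k → ℤ),
      (S : Set (Fin k → ℤ)) =
        {y : Fin k → ℤ | ∃ x : Fin n → ℕ,
          A.mulVec (fun j => (x j : ℤ)) = 0 ∧
          B.mulVec (fun j => (x j : ℤ)) = y} ∧ S.FG := by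
  let cast : (Fin n → ℕ) →+ (Fin n → ℤ) := (Nat.castAddMonoidHom ℤ).compLeft (Fin n)
  -- Gordan's lemma: the equalizer of `x ↦ A x` and `0` on `ℕⁿ` is finitely generated.
  let solutions := (A.mulVecLin.toAddMonoidHom.comp cast).eqLocusM 0
  exact ⟨solutions.map (B.mulVecLin.toAddMonoidHom.comp cast), rfl,
    (AddSubmonoid.fg_eqLocusM _ 0).map _⟩
end

section
/- For g₁, g₂ in the special linear group SL(3, ℂ), the first column of g₁ equals the first column of g₂ and the third row of g₁⁻¹ equals the third row of g₂⁻¹ if and only if g₁⁻¹ * g₂ is upper triangular with all diagonal entries equal to 1. -/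
/-!
Put `M = g₁⁻¹ * g₂`. Since `g₂ = g₁ * M` and `g₂⁻¹ = M⁻¹ * g₁⁻¹`, the two matrices share their
first column iff `M` fixes `e₀`, and the inverses share their third row iff `M` has third row
`e₂ᵀ`. A 3 × 3 matrix with first column `e₀` and last row `e₂ᵀ` has determinant `M 1 1`, so
`det M = 1` forces the remaining diagonal entry to be `1`.
-/

namespace Matrix

variable {l m n R : Type*} [Fintype m] [CommRing R]

theorem mul_apply_eq_of_col_eq (A : Matrix l m R) {B C : Matrix m n R} {k : n}
    (h : ∀ i, B i k = C i k) (i : l) : (A * B) i k = (A * C) i k := by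
  simp only [mul_apply, h]

theorem mul_apply_eq_of_row_eq {A B : Matrix l m R} (C : Matrix m n R) {k : l}
    (h : ∀ j, A k j = B k j) (j : n) : (A * C) k j = (B * C) k j := by
  simp only [mul_apply, h]

namespace SpecialLinearGroup

variable [Fintype n] [DecidableEq n]

theorem col_eq_iff_col_inv_mul_eq_one (g₁ g₂ : SpecialLinearGroup n R) (k : n) :
    (∀ i, (g₁ : Matrix n n R) i k = (g₂ : Matrix n n R) i k) ↔
      ∀ i, ((g₁⁻¹ * g₂ : SpecialLinearGroup n R) : Matrix n n R) i k = (1 : Matrix n n R) i k := by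
  constructor
  · intro h i
    rw [← coe_one, ← inv_mul_cancel g₁, coe_mul, coe_mul]
    exact (mul_apply_eq_of_col_eq _ h i).symm
  · intro h i
    have := mul_apply_eq_of_col_eq (g₁ : Matrix n n R) h i
    rwa [← coe_mul, mul_inv_cancel_left, Matrix.mul_one, eq_comm] at this

theorem row_inv_eq_iff_row_inv_mul_eq_one (g₁ g₂ : SpecialLinearGroup n R) (k : n) :
    (∀ j, ((g₁⁻¹ : SpecialLinearGroup n R) : Matrix n n R) k j =
        ((g₂⁻¹ : SpecialLinearGroup n R) : Matrix n n R) k j) ↔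
      ∀ j, ((g₁⁻¹ * g₂ : SpecialLinearGroup n R) : Matrix n n R) k j = (1 : Matrix n n R) k j := by
  constructor
  · intro h j
    rw [← coe_one, ← inv_mul_cancel g₂, coe_mul, coe_mul]
    exact mul_apply_eq_of_row_eq _ h j
  · intro h j
    have := mul_apply_eq_of_row_eq ((g₂⁻¹ : SpecialLinearGroup n R) : Matrix n n R) h j
    rwa [← coe_mul, mul_inv_cancel_right, Matrix.one_mul] at this

end SpecialLinearGroup

theorem col_zero_row_two_eq_one_iff_of_det_eq_one {M : Matrix (Fin 3) (Fin 3) R}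
    (hM : M.det = 1) :
    ((∀ i, M i 0 = (1 : Matrix (Fin 3) (Fin 3) R) i 0) ∧
        ∀ j, M 2 j = (1 : Matrix (Fin 3) (Fin 3) R) 2 j) ↔
      M 1 0 = 0 ∧ M 2 0 = 0 ∧ M 2 1 = 0 ∧ M 0 0 = 1 ∧ M 1 1 = 1 ∧ M 2 2 = 1 := by
  simp only [Fin.forall_fin_succ, IsEmpty.forall_iff, one_apply]
  simp only [Fin.reduceEq, Fin.succ_zero_eq_one, Fin.succ_one_eq_two, if_true, if_false,
    and_true]
  constructor
  · rintro ⟨⟨h00, h10, h20⟩, -, h21, h22⟩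
    rw [det_fin_three, h00, h10, h20, h21, h22] at hM
    exact ⟨h10, h20, h21, h00, by linear_combination hM, h22⟩
  · rintro ⟨h10, h20, h21, h00, -, h22⟩
    exact ⟨⟨h00, h10, h20⟩, h20, h21, h22⟩

end Matrix

open Matrix.SpecialLinearGroup in
/-- Fibers of the flag-encoding map: `g₁, g₂ ∈ SL(3,ℂ)` have the same first
column and the same third row of their inverses iff `g₁⁻¹ * g₂` is upper
triangular with all diagonal entries equal to `1` (i.e. `g₁` and `g₂` lie in
the same left coset of the standard maximal unipotent subgroup `U`). -/
theorem sl3_same_flag_iff_unipotent (g₁ g₂ : Matrix.SpecialLinearGroup (Fin 3) ℂ) :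
    ((∀ i, (g₁ : Matrix (Fin 3) (Fin 3) ℂ) i 0 =
           (g₂ : Matrix (Fin 3) (Fin 3) ℂ) i 0) ∧
     (∀ j, ((g₁⁻¹ : Matrix.SpecialLinearGroup (Fin 3) ℂ) :
             Matrix (Fin 3) (Fin 3) ℂ) 2 j =
           ((g₂⁻¹ : Matrix.SpecialLinearGroup (Fin 3) ℂ) :
             Matrix (Fin 3) (Fin 3) ℂ) 2 j)) ↔
    (((g₁⁻¹ * g₂ : Matrix.SpecialLinearGroup (Fin 3) ℂ) :
        Matrix (Fin 3) (Fin 3) ℂ) 1 0 = 0 ∧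
     ((g₁⁻¹ * g₂ : Matrix.SpecialLinearGroup (Fin 3) ℂ) :
        Matrix (Fin 3) (Fin 3) ℂ) 2 0 = 0 ∧
     ((g₁⁻¹ * g₂ : Matrix.SpecialLinearGroup (Fin 3) ℂ) :
        Matrix (Fin 3) (Fin 3) ℂ) 2 1 = 0 ∧
     ((g₁⁻¹ * g₂ : Matrix.SpecialLinearGroup (Fin 3) ℂ) :
        Matrix (Fin 3) (Fin 3) ℂ) 0 0 = 1 ∧
     ((g₁⁻¹ * g₂ : Matrix.SpecialLinearGroup (Fin 3) ℂ) :
        Matrix (Fin 3) (Fin 3) ℂ) 1 1 = 1 ∧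
     ((g₁⁻¹ * g₂ : Matrix.SpecialLinearGroup (Fin 3) ℂ) :
        Matrix (Fin 3) (Fin 3) ℂ) 2 2 = 1) := by
  rw [col_eq_iff_col_inv_mul_eq_one, row_inv_eq_iff_row_inv_mul_eq_one]
  exact Matrix.col_zero_row_two_eq_one_iff_of_det_eq_one (g₁⁻¹ * g₂).prop
end

section
/- Let U be the subgroup of SL(3, ℂ) consisting of upper triangular matrices with all diagonal entries equal to 1. The map sending g ∈ SL(3, ℂ) to the pair (first column of g, third row of g⁻¹) descends to the left-coset space SL(3, ℂ) / U and induces a bijection from SL(3, ℂ) / U onto the set {(v, f) : v, f : Fin 3 → ℂ, v ≠ 0, f ≠ 0, ∑ i, f i * v i = 0}. -/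
/-!
The map `g ↦ (g e₀, e₂ g⁻¹)` is equivariant for the action `g • (v, f) = (g v, f g⁻¹)`, so its
fibres are the left cosets of the stabiliser of `(e₀, e₂)`. That stabiliser consists of the
matrices with first column `e₀` and last row `e₂`; for these `det = u₁₁`, so it is exactly `U`.
The action is transitive on the pairs with `f v = 0`: complete `v` by `w ∈ ker f` and `x` with
`f x = 1` to a basis, and rescale `w` to make the determinant `1`.
-/

open Matrix Module Submodule
open scoped MatrixGroups

theorem QuotientGroup.exists_bijective_of_fibers {G X : Type*} [Group G] (H : Subgroup G)
    (F : G → X) (hF : ∀ a b, F a = F b ↔ a⁻¹ * b ∈ H) (hsurj : Function.Surjective F) :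
    ∃ e : G ⧸ H → X, Function.Bijective e ∧ ∀ g : G, e g = F g := by
  refine ⟨Quotient.lift F fun a b h => (hF a b).2 (leftRel_apply.1 h), ⟨?_, ?_⟩, fun _ => rfl⟩
  · rintro ⟨a⟩ ⟨b⟩ h
    exact QuotientGroup.eq.2 ((hF a b).1 h)
  · intro x
    obtain ⟨g, rfl⟩ := hsurj x
    exact ⟨g, rfl⟩

theorem Module.Dual.exists_linearIndependent_triple {K V : Type*} [Field K] [AddCommGroup V]
    [Module K V] [FiniteDimensional K V] {φ : Dual K V} (hφ : φ ≠ 0) (hV : 2 < finrank K V)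
    {v : V} (hv : v ≠ 0) (hφv : φ v = 0) :
    ∃ w x, φ w = 0 ∧ φ x = 1 ∧ LinearIndependent K ![v, w, x] := by
  have hker : 1 < finrank K (LinearMap.ker φ) := by
    have := φ.finrank_ker_add_one_of_ne_zero hφ
    omega
  obtain ⟨⟨w, hw⟩, hvw⟩ :=
    exists_linearIndependent_pair_of_one_lt_finrank hker (x := ⟨v, hφv⟩)
      fun h => hv (congrArg Subtype.val h)
  obtain ⟨x, hx⟩ := LinearMap.surjective hφ 1
  refine ⟨w, x, hw, hx, ?_⟩
  replace hvw : LinearIndependent K ![v, w] := by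
    have hcomp : (LinearMap.ker φ).subtype ∘ ![⟨v, hφv⟩, ⟨w, hw⟩] = ![v, w] := by
      ext i
      fin_cases i <;> rfl
    simpa only [hcomp] using hvw.map' _ (LinearMap.ker φ).ker_subtype
  have hspan : span K (Set.range ![v, w]) ≤ LinearMap.ker φ := by
    refine span_le.2 ?_
    rintro _ ⟨i, rfl⟩
    fin_cases i
    exacts [hφv, hw]
  have hx' : x ∉ span K (Set.range ![v, w]) := fun h => by simpa [hx] using hspan h
  simpa using hvw.finSnoc hx'

namespace Matrix.SpecialLinearGroup

section CommRing

variable {n R : Type*} [Fintype n] [DecidableEq n] [CommRing R]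

theorem row_inv_eq_of_vecMul_eq_single (g : SpecialLinearGroup n R) {f : n → R} {i : n}
    (h : f ᵥ* (g : Matrix n n R) = Pi.single i 1) : (↑(g⁻¹) : Matrix n n R).row i = f := by
  rw [← single_one_vecMul, ← h, vecMul_vecMul, ← coe_mul, mul_inv_cancel, coe_one, vecMul_one]

theorem row_inv_eq_single_iff (g : SpecialLinearGroup n R) (i : n) :
    (↑(g⁻¹) : Matrix n n R).row i = Pi.single i 1 ↔ (g : Matrix n n R).row i = Pi.single i 1 := by
  refine ⟨fun h => ?_, fun h => g.row_inv_eq_of_vecMul_eq_single ?_⟩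
  · simpa using g⁻¹.row_inv_eq_of_vecMul_eq_single (by rw [single_one_vecMul, h])
  · rw [single_one_vecMul, h]

/-- The paper's `(v, f)`: `v = v₁` is the first column of `g`, and the covector with
`f v₁ = f v₂ = 0`, `f v₃ = 1` is the last row of `g⁻¹`. -/
noncomputable def flagPair (g : SL(3, R)) : (Fin 3 → R) × (Fin 3 → R) :=
  ((g : Matrix (Fin 3) (Fin 3) R).col 0, (↑(g⁻¹) : Matrix (Fin 3) (Fin 3) R).row 2)

theorem flagPair_snd_dotProduct_fst (g : SL(3, R)) : (flagPair g).2 ⬝ᵥ (flagPair g).1 = 0 := by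
  have := congr_fun₂ (congrArg (fun h : SL(3, R) => (h : Matrix (Fin 3) (Fin 3) R))
    (inv_mul_cancel g)) 2 0
  rwa [coe_mul, mul_apply', coe_one, one_apply_ne (by decide)] at this

theorem flagPair_fst_ne_zero [Nontrivial R] (g : SL(3, R)) : (flagPair g).1 ≠ 0 := by
  rw [flagPair, col, ← coe_transpose]
  exact row_ne_zero gᵀ 0

theorem flagPair_snd_ne_zero [Nontrivial R] (g : SL(3, R)) : (flagPair g).2 ≠ 0 :=
  row_ne_zero g⁻¹ 2

theorem flagPair_mul (g u : SL(3, R)) :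
    flagPair (g * u) = ((g : Matrix (Fin 3) (Fin 3) R) *ᵥ (flagPair u).1,
      (flagPair u).2 ᵥ* (↑(g⁻¹) : Matrix (Fin 3) (Fin 3) R)) := by
  ext i <;> simp [flagPair, mul_apply, mulVec, vecMul, dotProduct, mul_comm]

theorem flagPair_mul_eq_flagPair_iff (g u : SL(3, R)) :
    flagPair (g * u) = flagPair g ↔ flagPair u = flagPair 1 := by
  have hg : IsUnit (g : Matrix (Fin 3) (Fin 3) R) := (Group.isUnit g).map coeMonoidHom
  have hg' : IsUnit (↑(g⁻¹) : Matrix (Fin 3) (Fin 3) R) := (Group.isUnit g⁻¹).map coeMonoidHom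
  have hg1 := flagPair_mul g 1
  rw [mul_one] at hg1
  rw [flagPair_mul, hg1, Prod.ext_iff, Prod.ext_iff, (mulVec_injective_of_isUnit hg).eq_iff,
    (vecMul_injective_of_isUnit hg').eq_iff]

theorem flagPair_eq_flagPair_one_iff (u : SL(3, R)) :
    flagPair u = flagPair 1 ↔
      ((u : Matrix (Fin 3) (Fin 3) R) 1 0 = 0 ∧ (u : Matrix (Fin 3) (Fin 3) R) 2 0 = 0 ∧
       (u : Matrix (Fin 3) (Fin 3) R) 2 1 = 0 ∧ (u : Matrix (Fin 3) (Fin 3) R) 0 0 = 1 ∧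
       (u : Matrix (Fin 3) (Fin 3) R) 1 1 = 1 ∧ (u : Matrix (Fin 3) (Fin 3) R) 2 2 = 1) := by
  have hone : flagPair (1 : SL(3, R)) = (Pi.single 0 1, Pi.single 2 1) := by
    ext i <;> fin_cases i <;> simp [flagPair]
  rw [hone, flagPair, Prod.mk.injEq, row_inv_eq_single_iff, funext_iff, funext_iff]
  simp only [col_apply, row_apply, Fin.forall_fin_succ, Fin.succ_zero_eq_one, Fin.succ_one_eq_two,
    Pi.single_eq_same, ne_eq, Fin.succ_ne_zero, not_false_eq_true, Pi.single_eq_of_ne,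
    IsEmpty.forall_iff, and_true, Fin.reduceEq]
  constructor
  · rintro ⟨⟨h00, h10, h20⟩, ⟨-, h21, h22⟩⟩
    have hdet := u.det_coe
    rw [det_fin_three, h10, h20, h21, h00, h22] at hdet
    exact ⟨h10, h20, h21, h00, by linear_combination hdet, h22⟩
  · rintro ⟨h10, h20, h21, h00, -, h22⟩
    exact ⟨⟨h00, h10, h20⟩, ⟨h20, h21, h22⟩⟩

end CommRing

theorem exists_flagPair_eq {K : Type*} [Field K] {v f : Fin 3 → K} (hv : v ≠ 0) (hf : f ≠ 0)
    (hfv : f ⬝ᵥ v = 0) : ∃ g : SL(3, K), flagPair g = (v, f) := by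
  obtain ⟨w, x, hw, hx, hli⟩ := (dotProductEquiv K (Fin 3) f).exists_linearIndependent_triple
    ((LinearEquiv.map_ne_zero_iff _).2 hf) (by simp) hv hfv
  simp only [dotProductEquiv_apply_apply] at hw hx
  set d := (of ![v, w, x]).det
  have hd : d ≠ 0 :=
    ((isUnit_iff_isUnit_det _).1 (linearIndependent_rows_iff_isUnit.1 hli)).ne_zero
  have hdet : (of ![v, d⁻¹ • w, x]).det = 1 := by
    rw [← inv_mul_cancel₀ hd]
    simp only [d, det_fin_three, of_apply, cons_val', cons_val_fin_one, cons_val_zero, cons_val_one,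
      cons_val, Pi.smul_apply, smul_eq_mul]
    ring
  refine ⟨⟨(of ![v, d⁻¹ • w, x])ᵀ, by rwa [det_transpose]⟩,
    Prod.ext rfl (row_inv_eq_of_vecMul_eq_single _ ?_)⟩
  rw [coe_mk, vecMul_transpose]
  ext i
  rw [dotProduct_comm] at hfv hw hx
  fin_cases i <;> simp [hfv, hw, hx]

end Matrix.SpecialLinearGroup

open Matrix.SpecialLinearGroup

/-- Correspondence (7) of the paper: the map sending `g ∈ SL(3,ℂ)` to the pair
(first column of `g`, third row of `g⁻¹`) descends to the left-coset space
`SL(3,ℂ) / U`, where `U` is the subgroup of upper triangular matrices with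
ones on the diagonal, and induces a bijection from `SL(3,ℂ) / U` onto the set
of pairs `(v, f)` with `v ≠ 0`, `f ≠ 0` and `f(v) = 0`. -/
theorem sl3_mod_unipotent_equiv_flag_pairs
    (U : Subgroup (Matrix.SpecialLinearGroup (Fin 3) ℂ))
    (hU : ∀ g : Matrix.SpecialLinearGroup (Fin 3) ℂ, g ∈ U ↔
      ((g : Matrix (Fin 3) (Fin 3) ℂ) 1 0 = 0 ∧
       (g : Matrix (Fin 3) (Fin 3) ℂ) 2 0 = 0 ∧
       (g : Matrix (Fin 3) (Fin 3) ℂ) 2 1 = 0 ∧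
       (g : Matrix (Fin 3) (Fin 3) ℂ) 0 0 = 1 ∧
       (g : Matrix (Fin 3) (Fin 3) ℂ) 1 1 = 1 ∧
       (g : Matrix (Fin 3) (Fin 3) ℂ) 2 2 = 1)) :
    ∃ e : (Matrix.SpecialLinearGroup (Fin 3) ℂ ⧸ U) →
      {p : (Fin 3 → ℂ) × (Fin 3 → ℂ) //
        p.1 ≠ 0 ∧ p.2 ≠ 0 ∧ ∑ i, p.2 i * p.1 i = 0},
      Function.Bijective e ∧
      ∀ g : Matrix.SpecialLinearGroup (Fin 3) ℂ,
        (e (QuotientGroup.mk g)).val =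
          ((fun i => (g : Matrix (Fin 3) (Fin 3) ℂ) i 0),
           (fun j => ((g⁻¹ : Matrix.SpecialLinearGroup (Fin 3) ℂ) :
             Matrix (Fin 3) (Fin 3) ℂ) 2 j)) := by
  have hfib : ∀ a b : SL(3, ℂ), flagPair a = flagPair b ↔ a⁻¹ * b ∈ U := fun a b => by
    rw [hU, ← flagPair_eq_flagPair_one_iff, ← flagPair_mul_eq_flagPair_iff a, mul_inv_cancel_left,
      eq_comm]
  obtain ⟨e, he, hmk⟩ := QuotientGroup.exists_bijective_of_fibers U
    (fun g => (⟨flagPair g, flagPair_fst_ne_zero g, flagPair_snd_ne_zero g,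
      flagPair_snd_dotProduct_fst g⟩ : {p : (Fin 3 → ℂ) × (Fin 3 → ℂ) //
        p.1 ≠ 0 ∧ p.2 ≠ 0 ∧ ∑ i, p.2 i * p.1 i = 0}))
    (fun a b => Subtype.ext_iff.trans (hfib a b))
    (fun ⟨(v, f), hv, hf, hfv⟩ => (exists_flagPair_eq hv hf hfv).imp fun _ hg => Subtype.ext hg)
  exact ⟨e, he, fun g => congrArg Subtype.val (hmk g)⟩
end
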